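/- Let U be a Hilbert space, Q : U → U* symmetric, injective, and not surjective, with image dense in U* (which follows from injectivity and symmetry). If a ∈ U* does not belong to im Q, then the subspace L = {(δp, δq) : ∃ v ∈ U, Q v = δp·a, δq = ⟨a, v⟩} equals {(0,0)}, and hence is not Lagrangian in ℝ². -/

import Mathlib

/-!
Through the Riesz isomorphism `U ≃ U*`, `Q` becomes a symmetric injective operator on `U`; the
orthogonal complement of its range is its kernel, which is trivial, so the range is dense.
If `(p, q) ∈ L` with `p ≠ 0`, then `a = Q (p⁻¹ • v)` would lie in the image of `Q`; hence `p = 0`,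
so `Q v = 0`, `v = 0` and `q = a v = 0`.
-/

open Module

/-- The `L`-derivative subspace for `M = ℝ`:
`L = {(δp, δq) : ∃ v, Q v = δp · a and δq = ⟨a, v⟩} ⊆ ℝ²`. -/
def Lderiv {U : Type*} [NormedAddCommGroup U] [InnerProductSpace ℝ U]
    (Q : U →L[ℝ] (U →L[ℝ] ℝ)) (a : U →L[ℝ] ℝ) : Submodule ℝ (ℝ × ℝ) where
  carrier := {x | ∃ v : U, Q v = x.1 • a ∧ x.2 = a v}
  add_mem' := by
    rintro ⟨p₁, q₁⟩ ⟨p₂, q₂⟩ ⟨v₁, hv₁, hq₁⟩ ⟨v₂, hv₂, hq₂⟩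
    refine ⟨v₁ + v₂, by simp [hv₁, hv₂, add_smul], ?_⟩
    show q₁ + q₂ = a (v₁ + v₂)
    rw [map_add]
    exact congrArg₂ (· + ·) hq₁ hq₂
  zero_mem' := ⟨0, by simp, by simp⟩
  smul_mem' := by
    rintro c ⟨p, q⟩ ⟨v, hv, hq⟩
    refine ⟨c • v, by simp [hv, smul_smul], ?_⟩
    show c • q = a (c • v)
    rw [map_smul, ← hq]

section

variable {U : Type*} [NormedAddCommGroup U] [InnerProductSpace ℝ U]

theorem LinearMap.IsSymmetric.denseRange_of_injective [CompleteSpace U] {T : U →ₗ[ℝ] U}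
    (hT : T.IsSymmetric) (hinj : Function.Injective T) : DenseRange T := by
  rw [DenseRange, ← LinearMap.coe_range, Submodule.dense_iff_topologicalClosure_eq_top,
    Submodule.topologicalClosure_eq_top_iff, hT.orthogonal_range, LinearMap.ker_eq_bot]
  exact hinj

theorem denseRange_of_symm_of_injective [CompleteSpace U] (Q : U →L[ℝ] (U →L[ℝ] ℝ))
    (hQsymm : ∀ x y : U, Q x y = Q y x) (hinj : Function.Injective Q) : DenseRange Q := by
  let d := InnerProductSpace.toDual ℝ U
  let T : U →ₗ[ℝ] U := d.symm.toLinearEquiv.toLinearMap ∘ₗ Q.toLinearMap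
  have hT : T.IsSymmetric := fun x y => by
    rw [← real_inner_comm x (T y)]
    simp [T, d, InnerProductSpace.toDual_symm_apply, hQsymm x y]
  have hQ : ⇑Q = d ∘ T := funext fun v => by simp [T]
  rw [hQ] at hinj ⊢
  exact d.surjective.denseRange.comp (hT.denseRange_of_injective hinj.of_comp) d.continuous

theorem Lderiv_eq_bot {Q : U →L[ℝ] (U →L[ℝ] ℝ)} {a : U →L[ℝ] ℝ}
    (hinj : Function.Injective Q) (ha : a ∉ Set.range Q) : Lderiv Q a = ⊥ := by
  rw [Submodule.eq_bot_iff]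
  rintro ⟨p, q⟩ ⟨v, hv, hq⟩
  have hp : p = 0 := by
    by_contra hp
    refine ha ⟨p⁻¹ • v, ?_⟩
    rw [map_smul, hv, smul_smul, inv_mul_cancel₀ hp, one_smul]
  subst hp
  have hv0 : v = 0 := hinj (by rw [hv, zero_smul, map_zero])
  subst hv0
  simpa using hq

end

theorem Lderiv_trivial_of_not_closed_range_general {U : Type*}
    [NormedAddCommGroup U] [InnerProductSpace ℝ U] [CompleteSpace U]
    (Q : U →L[ℝ] (U →L[ℝ] ℝ))
    (hQsymm : ∀ x y : U, Q x y = Q y x)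
    (hinj : Function.Injective Q)
    (a : U →L[ℝ] ℝ) (ha : a ∉ Set.range fun v : U => Q v) :
    Dense (Set.range fun v : U => Q v) ∧
    Lderiv Q a = ⊥ ∧ finrank ℝ (Lderiv Q a) ≠ 1 := by
  have hL := Lderiv_eq_bot hinj ha
  exact ⟨denseRange_of_symm_of_injective Q hQsymm hinj, hL, by rw [hL]; simp⟩

/-- if `Q : U → U*` is symmetric, injective and not surjective
(so that `im Q` is dense but not closed), and `a ∉ im Q`, then `L = {(0,0)}`
and hence `L` is not a Lagrangian (one-dimensional) subspace of `ℝ²`. -/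
theorem Lderiv_trivial_of_not_closed_range {U : Type*}
    [NormedAddCommGroup U] [InnerProductSpace ℝ U] [CompleteSpace U]
    (Q : U →L[ℝ] (U →L[ℝ] ℝ))
    (hQsymm : ∀ x y : U, Q x y = Q y x)
    (hinj : Function.Injective Q)
    (hnsurj : ¬ Function.Surjective Q)
    (a : U →L[ℝ] ℝ) (ha : a ∉ Set.range fun v : U => Q v) :
    Dense (Set.range fun v : U => Q v) ∧
    Lderiv Q a = ⊥ ∧ finrank ℝ (Lderiv Q a) ≠ 1 :=
  Lderiv_trivial_of_not_closed_range_general Q hQsymm hinj a ha
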